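/- Let G be a finite group and let 0 → P̂₁ → F̂ → T̂ → 0 be a short exact sequence of G-lattices in which P̂₁ is a permutation G-lattice and F̂ is a flasque G-lattice. Then the induced map H¹(G, F̂) → H¹(G, T̂) is injective with image Ш¹_ω(G, T̂); in particular H¹(G, F̂) ≅ Ш¹_ω(G, T̂). -/

import Mathlib

/-- `f : G → M` is a 1-cocycle for the action of `G` on `M`. -/
def IsOneCocycle {G M : Type} [Group G] [AddCommGroup M] [DistribMulAction G M]
    (f : G → M) : Prop :=
  ∀ g h : G, f (g * h) = f g + g • f h

/-- `f : G → M` is a 1-coboundary for the action of `G` on `M`. -/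
def IsOneCoboundary {G M : Type} [Group G] [AddCommGroup M] [DistribMulAction G M]
    (f : G → M) : Prop :=
  ∃ m : M, ∀ g : G, f g = g • m - m

/-- `M` is a permutation `G`-lattice: a `ℤ[G]`-module admitting a finite `ℤ`-basis
permuted by the action of `G`. -/
def IsPermutationLattice (G M : Type) [Group G] [AddCommGroup M] [DistribMulAction G M] :
    Prop :=
  ∃ (ι : Type) (b : Module.Basis ι ℤ M), Finite ι ∧ ∀ (g : G) (i : ι), ∃ j : ι, g • b i = b j

/-- `M` is a flasque `G`-lattice: for every subgroup `H ≤ G` one has `H¹(H, M°) = 0`,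
where `M° = Hom_ℤ(M, ℤ)` carries the contragredient action `(g • φ) m = φ (g⁻¹ • m)`:
every 1-cocycle `H → M°` is a coboundary. -/
def IsFlasqueLattice (G M : Type) [Group G] [AddCommGroup M] [DistribMulAction G M] :
    Prop :=
  ∀ (H : Subgroup G) (f : H → (M →ₗ[ℤ] ℤ)),
    (∀ (g h : H) (m : M), f (g * h) m = f g m + f h ((g : G)⁻¹ • m)) →
    ∃ φ : M →ₗ[ℤ] ℤ, ∀ (g : H) (m : M), f g m = φ ((g : G)⁻¹ • m) - φ m

/-!
Chase the sequence `0 → P̂₁ → F̂ → T̂ → 0` through cohomology. Injectivity is `H¹(G, P̂₁) = 0`,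
and surjectivity onto `Ш¹_ω` is the injectivity of `H²(G, P̂₁) → ∏_C H²(C, P̂₁)` over cyclic `C`.
In a permuted basis indexed by a `G`-set `X`, a cochain of `P̂₁` is a family `c g x`, and such a
1-cocycle is a coboundary as soon as `c s x = 0` whenever `s • x = x` (Shapiro's lemma made
explicit: choose a representative in each orbit). With coefficients in `ℤ` this condition is
automatic, as `c (s ^ k) x = k • c s x`; this gives `H¹ = 0`. For `H²`, averaging over `G`
splits a 2-cocycle `z` over `ℚ` as `z = δβ`; then `β mod ℤ` is a `ℚ/ℤ`-valued 1-cocycle, and the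
triviality of `z` on each cyclic subgroup `⟨s⟩` is exactly what makes it vanish at the fixed
points of `s`.

The image lands in `Ш¹_ω` because `H¹(C, F̂) = 0` for `C = ⟨g⟩` cyclic. An element `x` of norm
zero has `|C| • x ∈ (g - 1)F̂`, and `(g - 1)F̂` is saturated: by Smith normal form it suffices
that the image of the dual map `(g - 1)^*` in `F̂°` is saturated, and a functional killed by the
norm extends to a 1-cocycle of `⟨g⁻¹⟩` in `F̂°`, which flasqueness makes a coboundary.
-/

open Finset Module

section Cochains

variable {G M : Type} [Group G] [AddCommGroup M] [DistribMulAction G M]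

theorem IsOneCocycle.map_one {f : G → M} (hf : IsOneCocycle f) : f 1 = 0 := by
  simpa using hf 1 1

theorem IsOneCocycle.sub_coboundary {f : G → M} (hf : IsOneCocycle f) (m : M) :
    IsOneCocycle fun g => f g - (g • m - m) := by
  intro g h
  simp only [hf g h, smul_sub, mul_smul]
  abel

theorem IsOneCocycle.apply_zpow_eq_zero {f : G → M} (hf : IsOneCocycle f) {g : G}
    (hg : f g = 0) (k : ℤ) : f (g ^ k) = 0 := by
  let H : Subgroup G :=
    { carrier := {a | f a = 0}
      one_mem' := hf.map_one
      mul_mem' := fun {a b} ha hb => by simp_all [hf a b]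
      inv_mem' := fun {a} (ha : f a = 0) => by
        simpa [ha, hf.map_one, eq_comm] using hf a⁻¹ a }
  exact H.zpow_mem hg k

theorem IsOneCocycle.isOneCoboundary_zpowers {f : G → M} (hf : IsOneCocycle f) {g : G} {m : M}
    (hm : f g = g • m - m) : IsOneCoboundary fun a : Subgroup.zpowers g => f a := by
  refine ⟨m, fun ⟨a, ha⟩ => ?_⟩
  obtain ⟨k, rfl⟩ := Subgroup.mem_zpowers_iff.mp ha
  exact sub_eq_zero.mp ((hf.sub_coboundary m).apply_zpow_eq_zero (sub_eq_zero.mpr hm) k)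

theorem IsOneCocycle.apply_pow {f : G → M} (hf : IsOneCocycle f) (g : G) (k : ℕ) :
    f (g ^ k) = ∑ j ∈ range k, g ^ j • f g := by
  induction k with
  | zero => simp [hf.map_one]
  | succ k ih => rw [pow_succ, hf, ih, sum_range_succ]

theorem IsOneCocycle.sum_pow_smul_eq_zero {f : G → M} (hf : IsOneCocycle f) (g : G) :
    ∑ k ∈ range (orderOf g), g ^ k • f g = 0 := by
  rw [← hf.apply_pow, pow_orderOf_eq_one, hf.map_one]

theorem IsOneCoboundary.map {N : Type} [AddCommGroup N] [DistribMulAction G N] (φ : M →+ N)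
    (hφ : ∀ (g : G) x, φ (g • x) = g • φ x) {f : G → M} (hf : IsOneCoboundary f) :
    IsOneCoboundary fun g => φ (f g) := by
  obtain ⟨m, hm⟩ := hf
  exact ⟨φ m, fun g => by simp only [hm, map_sub, hφ]⟩

theorem pow_smul_sub_self (g : G) (x : M) (k : ℕ) :
    g ^ k • x - x = g • (∑ j ∈ range k, g ^ j • x) - ∑ j ∈ range k, g ^ j • x := by
  rw [smul_sum, ← sum_sub_distrib]
  simp_rw [← mul_smul, ← pow_succ']
  rw [sum_range_sub (fun j => g ^ j • x), pow_zero, one_smul]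

theorem exists_isOneCocycle_zpowers {g : G} (hg : IsOfFinOrder g) {x : M}
    (hx : ∑ k ∈ range (orderOf g), g ^ k • x = 0) :
    ∃ f : Subgroup.zpowers g → M, IsOneCocycle f ∧ f ⟨g, Subgroup.mem_zpowers g⟩ = x := by
  set n := orderOf g
  set S : ℕ → M := fun a => ∑ j ∈ range a, g ^ j • x
  have hS_add : ∀ a b, S (a + b) = S a + g ^ a • S b := by
    intro a b
    simp only [S, sum_range_add, smul_sum, ← mul_smul, ← pow_add]
  have hS_mul : ∀ t, S (n * t) = 0 := by
    intro t
    induction t with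
    | zero => simp [S]
    | succ t ih => rw [Nat.mul_succ, hS_add, ih]; simp [S, n, hx]
  have hS : ∀ a b, g ^ a = g ^ b → S a = S b := by
    have hS_mod : ∀ a, S a = S (a % n) := fun a => by
      conv_lhs => rw [← Nat.mod_add_div a n]
      rw [hS_add, hS_mul, smul_zero, add_zero]
    intro a b hab
    rw [hS_mod a, hS_mod b, pow_eq_pow_iff_modEq.mp hab]
  choose e he using fun c : Subgroup.zpowers g => hg.mem_powers_iff_mem_zpowers.mpr c.2
  refine ⟨fun c => S (e c), fun c d => ?_, ?_⟩
  · have : g ^ e (c * d) = g ^ (e c + e d) := by simp only [he, pow_add]; rfl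
    simp only [hS _ _ this, hS_add, he]
    rfl
  · exact (hS _ 1 (by simp only [he, pow_one])).trans (by simp [S])

end Cochains

section TwoCocycles

variable {G M : Type} [Group G] [AddCommGroup M] [DistribMulAction G M]

def IsTwoCocycle (z : G → G → M) : Prop :=
  ∀ g h k, z g h + z (g * h) k = g • z h k + z g (h * k)

def IsTwoCoboundary (z : G → G → M) : Prop :=
  ∃ c : G → M, ∀ g h, z g h = c g + g • c h - c (g * h)

theorem isTwoCocycle_coboundary (c : G → M) :
    IsTwoCocycle fun g h => c g + g • c h - c (g * h) := by
  intro g h k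
  simp only [smul_add, smul_sub, mul_smul, mul_assoc]
  abel

theorem IsTwoCocycle.card_smul_eq [Fintype G] {z : G → G → M} (hz : IsTwoCocycle z) (g h : G) :
    Fintype.card G • z g h = (∑ k, z g k) + g • ∑ k, z h k - ∑ k, z (g * h) k := by
  have hsum := Finset.sum_congr rfl fun k (_ : k ∈ univ) => hz g h k
  have hshift : ∑ k, z g (h * k) = ∑ k, z g k :=
    Fintype.sum_equiv (Equiv.mulLeft h) _ _ fun _ => rfl
  rw [sum_add_distrib, sum_add_distrib, sum_const, card_univ, ← smul_sum, hshift] at hsum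
  rw [eq_sub_iff_add_eq, hsum, add_comm]

end TwoCocycles

section ActionCocycles

variable {G X A : Type*} [Group G] [MulAction G X] [AddCommGroup A]

theorem exists_eq_sub_of_vanish_on_stabilizers {c : G → X → A}
    (hc : ∀ g h x, c (g * h) x = c g x + c h (g⁻¹ • x))
    (hstab : ∀ s x, s • x = x → c s x = 0) :
    ∃ q : X → A, ∀ g x, c g x = q (g⁻¹ • x) - q x := by
  have hc_congr : ∀ a b x, a⁻¹ • x = b⁻¹ • x → c a x = c b x := by
    intro a b x hab
    have hfix : (a⁻¹ * b) • a⁻¹ • x = a⁻¹ • x := by simp [mul_smul, hab]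
    rw [← mul_inv_cancel_left a b, hc, hstab _ _ hfix, add_zero]
  let r : X → X := fun x => (Quotient.mk (MulAction.orbitRel G X) x).out
  have hr_smul : ∀ (g : G) x, r (g • x) = r x := fun g x =>
    congrArg Quotient.out (Quotient.sound (MulAction.mem_orbit x g))
  have hr : ∀ x, ∃ τ : G, τ⁻¹ • x = r x := fun x => by
    obtain ⟨g, hg⟩ := MulAction.orbitRel_apply.mp (Quotient.mk_out (s := MulAction.orbitRel G X) x)
    exact ⟨g⁻¹, by rw [inv_inv]; exact hg⟩
  choose τ hτ using hr
  refine ⟨fun x => -c (τ x) x, fun g x => ?_⟩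
  have hg := hc g (τ (g⁻¹ • x)) x
  rw [hc_congr _ (τ x) x (by rw [mul_inv_rev, mul_smul, hτ, hτ, hr_smul])] at hg
  simp only [hg]
  abel

theorem apply_eq_zero_of_smul_eq [IsAddTorsionFree A] {c : G → X → A}
    (hc : ∀ g h x, c (g * h) x = c g x + c h (g⁻¹ • x)) {s : G} (hs : IsOfFinOrder s) {x : X}
    (hx : s • x = x) : c s x = 0 := by
  have hpow : ∀ k : ℕ, c (s ^ k) x = k • c s x := by
    intro k
    induction k with
    | zero => simpa using hc 1 1 x
    | succ k ih => rw [pow_succ', hc, inv_smul_eq_iff.mpr hx.symm, ih, succ_nsmul']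
  have h := hpow (orderOf s)
  rw [pow_orderOf_eq_one, ← pow_zero s, hpow 0, zero_smul, eq_comm] at h
  exact (nsmul_eq_zero_iff_right hs.orderOf_pos.ne').mp h

theorem exists_sub_mem_of_mem_on_stabilizers {S : AddSubgroup A} {β : G → X → A}
    (hβ : ∀ g h x, β g x + β h (g⁻¹ • x) - β (g * h) x ∈ S)
    (hstab : ∀ s x, s • x = x → β s x ∈ S) :
    ∃ q : X → A, ∀ g x, β g x - q (g⁻¹ • x) + q x ∈ S := by
  let c : G → X → A ⧸ S := fun g x => β g x
  have hc : ∀ g h x, c (g * h) x = c g x + c h (g⁻¹ • x) := fun g h x => by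
    rw [eq_comm, ← sub_eq_zero]
    exact (QuotientAddGroup.eq_zero_iff _).mpr (hβ g h x)
  obtain ⟨Q, hQ⟩ := exists_eq_sub_of_vanish_on_stabilizers hc fun s x hs =>
    (QuotientAddGroup.eq_zero_iff _).mpr (hstab s x hs)
  choose q hq using fun x => QuotientAddGroup.mk_surjective (s := S) (Q x)
  refine ⟨q, fun g x => (QuotientAddGroup.eq_zero_iff _).mp ?_⟩
  simp only [QuotientAddGroup.mk_add, QuotientAddGroup.mk_sub, hq]
  rw [sub_add, ← hQ]
  exact sub_self _

end ActionCocycles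

section PermutationLattice

variable {G P : Type} [Group G] [AddCommGroup P] [DistribMulAction G P]

theorem IsPermutationLattice.exists_basis (hP : IsPermutationLattice G P) :
    ∃ (ι : Type) (_ : Finite ι) (_ : MulAction G ι) (b : Basis ι ℤ P),
      ∀ (g : G) i, g • b i = b (g • i) := by
  obtain ⟨ι, b, hι, hperm⟩ := hP
  choose σ hσ using hperm
  have hσ_one : ∀ i, σ 1 i = i := fun i => b.injective (by rw [← hσ, one_smul])
  have hσ_mul : ∀ g h i, σ (g * h) i = σ g (σ h i) := fun g h i =>
    b.injective (by rw [← hσ, ← hσ, ← hσ, mul_smul])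
  exact ⟨ι, hι, { smul := σ, one_smul := hσ_one, mul_smul := hσ_mul }, b, hσ⟩

theorem Module.Basis.repr_smul_of_smul_eq {ι : Type} [MulAction G ι] {b : Basis ι ℤ P}
    (hb : ∀ (g : G) i, g • b i = b (g • i)) (g : G) (x : P) (i : ι) :
    b.repr (g • x) i = b.repr x (g⁻¹ • i) := by
  classical
  have : (b.coord i).comp (DistribSMul.toLinearMap ℤ P g) = b.coord (g⁻¹ • i) :=
    b.ext fun k => by
      simp only [LinearMap.comp_apply, DistribSMul.toLinearMap_apply, hb, Basis.coord_apply,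
        Basis.repr_self, Finsupp.single_apply, eq_inv_smul_iff]
  exact LinearMap.congr_fun this x

theorem IsPermutationLattice.isOneCoboundary [Finite G] (hP : IsPermutationLattice G P)
    {p : G → P} (hp : IsOneCocycle p) : IsOneCoboundary p := by
  obtain ⟨ι, _, _, b, hb⟩ := hP.exists_basis
  let c : G → ι → ℤ := fun g i => b.repr (p g) i
  have hc : ∀ g h i, c (g * h) i = c g i + c h (g⁻¹ • i) := by
    intro g h i
    simp only [c, hp g h, map_add, Finsupp.add_apply, b.repr_smul_of_smul_eq hb]
  obtain ⟨q, hq⟩ := exists_eq_sub_of_vanish_on_stabilizers hc fun s i hs =>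
    apply_eq_zero_of_smul_eq hc (isOfFinOrder_of_finite s) hs
  refine ⟨b.equivFun.symm q, fun g => b.repr.injective (Finsupp.ext fun i => ?_)⟩
  have hm : ∀ j, b.repr (b.equivFun.symm q) j = q j := fun j => b.coord_equivFun_symm j q
  rw [map_sub, Finsupp.sub_apply, b.repr_smul_of_smul_eq hb, hm, hm]
  exact hq g i

theorem IsTwoCocycle.exists_repr_eq_ratCoboundary [Fintype G] {ι : Type} [MulAction G ι]
    {b : Basis ι ℤ P} (hb : ∀ (g : G) i, g • b i = b (g • i)) {z : G → G → P}
    (hz : IsTwoCocycle z) :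
    ∃ β : G → ι → ℚ, ∀ g h i, (b.repr (z g h) i : ℚ) = β g i + β h (g⁻¹ • i) - β (g * h) i := by
  refine ⟨fun g i => (b.repr (∑ k, z g k) i : ℚ) / Fintype.card G, fun g h i => ?_⟩
  have hcard := congrArg (fun y => (b.repr y i : ℚ)) (hz.card_smul_eq g h)
  simp only [map_nsmul, map_add, map_sub, Finsupp.smul_apply, Finsupp.add_apply,
    Finsupp.sub_apply, b.repr_smul_of_smul_eq hb, nsmul_eq_mul] at hcard
  push_cast at hcard
  have hcard_pos : (0 : ℚ) < Fintype.card G := by exact_mod_cast Fintype.card_pos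
  field_simp
  linarith

theorem exists_intCast_eq_of_isTwoCoboundary_zpowers [Finite G] {ι : Type} [MulAction G ι]
    {b : Basis ι ℤ P} (hb : ∀ (g : G) i, g • b i = b (g • i)) {z : G → G → P}
    {β : G → ι → ℚ} (hβ : ∀ g h i, (b.repr (z g h) i : ℚ) = β g i + β h (g⁻¹ • i) - β (g * h) i)
    {s : G} (hs : IsTwoCoboundary fun a b : Subgroup.zpowers s => z a b) {i : ι}
    (hi : s • i = i) : ∃ m : ℤ, (m : ℚ) = β s i := by
  obtain ⟨p, hp⟩ := hs
  -- on `⟨s⟩`, `β - p` is a `ℚ`-valued 1-cocycle, so it vanishes where `s` has a fixed point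
  let w : Subgroup.zpowers s → ι → ℚ := fun a i => β a i - b.repr (p a) i
  have hw : ∀ a a' i, w (a * a') i = w a i + w a' (a⁻¹ • i) := by
    intro a a' i
    have h := hβ a a' i
    simp only [hp a a', map_sub, map_add, Finsupp.sub_apply, Finsupp.add_apply,
      Subgroup.smul_def, b.repr_smul_of_smul_eq hb] at h
    push_cast at h
    simp only [w, Subgroup.coe_mul, Subgroup.smul_def, InvMemClass.coe_inv]
    linarith
  have hw0 := apply_eq_zero_of_smul_eq hw (isOfFinOrder_of_finite ⟨s, Subgroup.mem_zpowers s⟩) hi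
  exact ⟨b.repr (p ⟨s, Subgroup.mem_zpowers s⟩) i, (sub_eq_zero.mp hw0).symm⟩

theorem IsPermutationLattice.isTwoCoboundary_of_forall_zpowers [Finite G]
    (hP : IsPermutationLattice G P) {z : G → G → P} (hz : IsTwoCocycle z)
    (hcyc : ∀ g : G, IsTwoCoboundary fun a b : Subgroup.zpowers g => z a b) :
    IsTwoCoboundary z := by
  have := Fintype.ofFinite G
  obtain ⟨ι, _, _, b, hb⟩ := hP.exists_basis
  obtain ⟨β, hβ⟩ := hz.exists_repr_eq_ratCoboundary hb
  obtain ⟨q, hq⟩ := exists_sub_mem_of_mem_on_stabilizers (S := (Int.castAddHom ℚ).range) (β := β)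
    (fun g h i => ⟨b.repr (z g h) i, hβ g h i⟩)
    (fun s i hi => exists_intCast_eq_of_isTwoCoboundary_zpowers hb hβ (hcyc s) hi)
  choose γ hγ using hq
  simp only [Int.coe_castAddHom] at hγ
  have hrepr : ∀ v j, b.repr (b.equivFun.symm v) j = v j := fun v j => b.coord_equivFun_symm j v
  refine ⟨fun g => b.equivFun.symm (γ g), fun g h => b.repr.injective (Finsupp.ext fun i => ?_)⟩
  rw [map_sub, map_add, Finsupp.sub_apply, Finsupp.add_apply, b.repr_smul_of_smul_eq hb,
    hrepr, hrepr, hrepr]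
  have : (b.repr (z g h) i : ℚ) = γ g i + γ h (g⁻¹ • i) - γ (g * h) i := by
    simp only [hγ, hβ, mul_inv_rev, mul_smul]
    ring
  exact_mod_cast this

end PermutationLattice

section SmithNormalForm

variable {R M : Type*} [CommRing R] [IsDomain R] [AddCommGroup M] [Module R M]

theorem Module.Basis.SmithNormalForm.mem_of_smul_mem {N : Submodule R M} {ι : Type*} [Finite ι]
    {n : ℕ} (snf : Basis.SmithNormalForm N ι n) (hunit : ∀ i, IsUnit (snf.a i)) {k : R}
    (hk : k ≠ 0) {x : M} (hx : k • x ∈ N) : x ∈ N := by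
  have := Fintype.ofFinite ι
  have hbasis : ∀ i, snf.bM (snf.f i) ∈ N := fun i => by
    obtain ⟨w, hw⟩ := hunit i
    have := N.smul_mem (↑w⁻¹ : R) (snf.snf i ▸ (snf.bN i).2)
    rwa [smul_smul, ← hw, Units.inv_mul, one_smul] at this
  rw [← snf.bM.sum_repr x]
  refine N.sum_mem fun j _ => ?_
  by_cases hj : j ∈ Set.range snf.f
  · obtain ⟨i, rfl⟩ := hj
    exact N.smul_mem _ (hbasis i)
  · have h0 := snf.repr_eq_zero_of_notMem_range ⟨k • x, hx⟩ hj
    rw [map_smul, Finsupp.smul_apply, smul_eq_mul, mul_eq_zero, or_iff_right hk] at h0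
    rw [h0, zero_smul]
    exact N.zero_mem

theorem Module.Basis.SmithNormalForm.isUnit_a_of_range_dualMap {E : Type*} [AddCommGroup E]
    [Module R E] {u : E →ₗ[R] M} {ι : Type*} {n : ℕ}
    (snf : Basis.SmithNormalForm (LinearMap.range u) ι n)
    (hu : ∀ (φ : Dual R E) (k : R), k ≠ 0 → k • φ ∈ LinearMap.range u.dualMap →
      φ ∈ LinearMap.range u.dualMap) (i : Fin n) : IsUnit (snf.a i) := by
  have ha : snf.a i ≠ 0 := fun h0 =>
    snf.bN.ne_zero i (Subtype.ext (by rw [snf.snf i, h0, zero_smul]; rfl))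
  let χ : Dual R E := snf.bN.coord i ∘ₗ u.rangeRestrict
  have hχ : snf.a i • χ = u.dualMap (snf.bM.coord (snf.f i)) := by
    ext y
    simpa [χ] using (snf.repr_apply_embedding_eq_repr_smul (u.rangeRestrict y) (i := i)).symm
  obtain ⟨ψ, hψ⟩ := hu χ _ ha ⟨_, hχ.symm⟩
  obtain ⟨y, hy⟩ := (snf.bN i).2
  have hχy : χ y = 1 := by
    simp [χ, show u.rangeRestrict y = snf.bN i from Subtype.ext hy]
  refine .of_mul_eq_one (ψ (snf.bM (snf.f i))) ?_
  rw [← hχy, ← hψ, LinearMap.dualMap_apply, hy, snf.snf, map_smul, smul_eq_mul]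

variable [IsPrincipalIdealRing R] [Free R M] [Module.Finite R M]

theorem LinearMap.mem_range_of_smul_mem_range {E : Type*} [AddCommGroup E] [Module R E]
    (u : E →ₗ[R] M)
    (hu : ∀ (φ : Dual R E) (k : R), k ≠ 0 → k • φ ∈ range u.dualMap → φ ∈ range u.dualMap)
    {k : R} (hk : k ≠ 0) {x : M} (hx : k • x ∈ range u) : x ∈ range u := by
  obtain ⟨n, snf⟩ := (range u).smithNormalForm (Free.chooseBasis R M)
  exact snf.mem_of_smul_mem (snf.isUnit_a_of_range_dualMap hu) hk hx

end SmithNormalForm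

section Flasque

variable {G M : Type} [Group G] [AddCommGroup M] [DistribMulAction G M]

abbrev contragredientAction : DistribMulAction G (Dual ℤ M) where
  smul g φ := φ ∘ₗ DistribSMul.toLinearMap ℤ M g⁻¹
  one_smul φ := LinearMap.ext fun m => show φ ((1 : G)⁻¹ • m) = φ m by rw [inv_one, one_smul]
  mul_smul g h φ := LinearMap.ext fun m =>
    show φ ((g * h)⁻¹ • m) = φ (h⁻¹ • g⁻¹ • m) by rw [mul_inv_rev, mul_smul]
  smul_zero _ := rfl
  smul_add _ _ _ := rfl

theorem IsFlasqueLattice.exists_eq_comp_smul_sub (hF : IsFlasqueLattice G M) {g : G}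
    (hg : IsOfFinOrder g) {φ : Dual ℤ M} (hφ : ∀ y, φ (∑ k ∈ range (orderOf g), g ^ k • y) = 0) :
    ∃ φ₀ : Dual ℤ M, ∀ y, φ y = φ₀ (g • y - y) := by
  let := contragredientAction (G := G) (M := M)
  have hsmul : ∀ (a : G) (χ : Dual ℤ M) y, (a • χ) y = χ (a⁻¹ • y) := fun _ _ _ => rfl
  -- for `g⁻¹` the contragredient norm of `φ` is `φ ∘ ∑ₖ gᵏ`, which vanishes
  obtain ⟨f, hf, hfg⟩ := exists_isOneCocycle_zpowers hg.inv (x := φ) (by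
    ext y
    simpa [orderOf_inv, hsmul, inv_pow, map_sum] using hφ y)
  -- `IsFlasqueLattice` is `H¹ = 0` for the restrictions of `contragredientAction`, unfolded
  obtain ⟨φ₀, hφ₀⟩ := hF _ f fun a b y => LinearMap.congr_fun (hf a b) y
  refine ⟨φ₀, fun y => ?_⟩
  rw [← hfg, hφ₀, map_sub]
  show φ₀ (g⁻¹⁻¹ • y) - _ = _
  rw [inv_inv]

theorem IsFlasqueLattice.exists_eq_smul_sub [Free ℤ M] [Module.Finite ℤ M]
    (hF : IsFlasqueLattice G M) {g : G} (hg : IsOfFinOrder g) {x : M}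
    (hx : ∑ k ∈ range (orderOf g), g ^ k • x = 0) : ∃ m, x = g • m - m := by
  let u : M →ₗ[ℤ] M := DistribSMul.toLinearMap ℤ M g - LinearMap.id
  have hu : ∀ y, u y = g • y - y := fun _ => rfl
  have hnx : (orderOf g : ℤ) • x = u (-∑ k ∈ range (orderOf g), ∑ j ∈ range k, g ^ j • x) := by
    rw [map_neg, map_sum]
    simp only [hu, ← pow_smul_sub_self, sum_sub_distrib, hx, sum_const, card_range, zero_sub,
      neg_neg, natCast_zsmul]
  have hsat : ∀ (φ : Dual ℤ M) (k : ℤ), k ≠ 0 → k • φ ∈ LinearMap.range u.dualMap →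
      φ ∈ LinearMap.range u.dualMap := by
    rintro φ k hk ⟨ψ, hψ⟩
    have hφN : ∀ y, φ (∑ j ∈ range (orderOf g), g ^ j • y) = 0 := fun y => by
      have := LinearMap.congr_fun hψ (∑ j ∈ range (orderOf g), g ^ j • y)
      rw [LinearMap.dualMap_apply, hu, ← pow_smul_sub_self, pow_orderOf_eq_one, one_smul,
        sub_self, map_zero, LinearMap.smul_apply, smul_eq_mul, eq_comm, mul_eq_zero] at this
      exact this.resolve_left hk
    obtain ⟨φ₀, hφ₀⟩ := hF.exists_eq_comp_smul_sub hg hφN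
    exact ⟨φ₀, LinearMap.ext fun y => (hφ₀ y).symm⟩
  obtain ⟨m, hm⟩ := u.mem_range_of_smul_mem_range hsat
    (Int.natCast_ne_zero.mpr hg.orderOf_pos.ne') ⟨_, hnx.symm⟩
  exact ⟨m, hm.symm⟩

end Flasque

section ExactSequence

variable {K P F T : Type} [Group K] [AddCommGroup P] [AddCommGroup F] [DistribMulAction K F]
  [AddCommGroup T] [DistribMulAction K T]

theorem exists_lift_sub_coboundary {j : P →+ F} {π : F →+ T}
    (hπG : ∀ (g : K) x, π (g • x) = g • π x) (hπsurj : Function.Surjective π)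
    (hex : Function.Exact j π) {f : K → F} (hf : IsOneCoboundary fun g => π (f g)) :
    ∃ (m : F) (p : K → P), ∀ g, j (p g) = f g - (g • m - m) := by
  obtain ⟨t, ht⟩ := hf
  obtain ⟨m, rfl⟩ := hπsurj t
  choose p hp using fun g => (hex (f g - (g • m - m))).mp
    (by rw [map_sub, map_sub, hπG]; exact sub_eq_zero.mpr (ht g))
  exact ⟨m, p, hp⟩

variable [DistribMulAction K P]

theorem isOneCoboundary_of_isOneCoboundary_comp {j : P →+ F} {π : F →+ T}
    (hP : ∀ p : K → P, IsOneCocycle p → IsOneCoboundary p)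
    (hjG : ∀ (g : K) x, j (g • x) = g • j x) (hπG : ∀ (g : K) x, π (g • x) = g • π x)
    (hjinj : Function.Injective j) (hπsurj : Function.Surjective π) (hex : Function.Exact j π)
    {f : K → F} (hf : IsOneCocycle f) (hπf : IsOneCoboundary fun g => π (f g)) :
    IsOneCoboundary f := by
  obtain ⟨m, p, hp⟩ := exists_lift_sub_coboundary hπG hπsurj hex hπf
  have hpc : IsOneCocycle p := fun g h =>
    hjinj (by rw [map_add, hjG, hp, hp, hp]; exact hf.sub_coboundary m g h)
  obtain ⟨m₀, hm₀⟩ := hP p hpc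
  refine ⟨j m₀ + m, fun g => ?_⟩
  rw [← sub_add_cancel (f g) (g • m - m), ← hp, hm₀, map_sub, hjG, smul_add]
  abel

theorem exists_isOneCocycle_comp_eq {j : P →+ F} {π : F →+ T}
    (hP : ∀ z : K → K → P, IsTwoCocycle z →
      (∀ g : K, IsTwoCoboundary fun a b : Subgroup.zpowers g => z a b) → IsTwoCoboundary z)
    (hjG : ∀ (g : K) x, j (g • x) = g • j x) (hπG : ∀ (g : K) x, π (g • x) = g • π x)
    (hjinj : Function.Injective j) (hπsurj : Function.Surjective π) (hex : Function.Exact j π)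
    {t : K → T} (ht : IsOneCocycle t)
    (hsha : ∀ g : K, IsOneCoboundary fun a : Subgroup.zpowers g => t (a : K)) :
    ∃ f : K → F, IsOneCocycle f ∧ ∀ g, π (f g) = t g := by
  choose f₀ hf₀ using fun g => hπsurj (t g)
  choose z hz using fun g h => (hex (f₀ g + g • f₀ h - f₀ (g * h))).mp
    (by rw [map_sub, map_add, hπG, hf₀, hf₀, hf₀, ht g h, sub_self])
  have hzc : IsTwoCocycle z := fun g h k => hjinj (by
    simpa only [map_add, hjG, hz] using isTwoCocycle_coboundary f₀ g h k)
  have hzcyc : ∀ g : K, IsTwoCoboundary fun a b : Subgroup.zpowers g => z a b := by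
    intro g
    obtain ⟨m, p, hp⟩ := exists_lift_sub_coboundary (K := Subgroup.zpowers g) (j := j)
      (fun a => hπG a) hπsurj hex (f := fun a => f₀ a) (by simpa only [hf₀] using hsha g)
    refine ⟨p, fun a b => hjinj ?_⟩
    simp only [hz, map_sub, map_add, Subgroup.smul_def, hjG, hp, Subgroup.coe_mul, smul_sub,
      mul_smul]
    abel
  obtain ⟨c, hc⟩ := hP z hzc hzcyc
  refine ⟨fun g => f₀ g - j (c g), fun g h => ?_, fun g => by
    rw [map_sub, hf₀, hex.apply_apply_eq_zero, sub_zero]⟩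
  have hjc := congrArg j (hc g h)
  rw [hz, map_sub, map_add, hjG] at hjc
  beta_reduce
  rw [smul_sub, ← sub_eq_zero, ← neg_eq_zero, ← sub_eq_zero.mpr hjc]
  abel

end ExactSequence

theorem H1_flasque_isoOnto_sha1_omega_general
    {G P1 F T : Type} [Group G] [Finite G]
    [AddCommGroup P1] [DistribMulAction G P1]
    [AddCommGroup F] [DistribMulAction G F] [Module.Free ℤ F] [Module.Finite ℤ F]
    [AddCommGroup T] [DistribMulAction G T]
    (j : P1 →+ F) (π : F →+ T)
    (hjG : ∀ (g : G) (x : P1), j (g • x) = g • j x)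
    (hπG : ∀ (g : G) (x : F), π (g • x) = g • π x)
    (hjinj : Function.Injective j) (hπsurj : Function.Surjective π)
    (hex : Function.Exact j π)
    (hP1 : IsPermutationLattice G P1) (hF : IsFlasqueLattice G F) :
    -- the induced map `H¹(G, F̂) → H¹(G, T̂)` is injective …
    (∀ f : G → F, IsOneCocycle f → IsOneCoboundary (fun g : G => π (f g)) →
      IsOneCoboundary f) ∧
    -- … its image lands in `Ш¹_ω(G, T̂)` …
    (∀ f : G → F, IsOneCocycle f → ∀ g₀ : G,
      IsOneCoboundary (fun h : Subgroup.zpowers g₀ => π (f (h : G)))) ∧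
    -- … and every class of `Ш¹_ω(G, T̂)` is in the image.
    (∀ t : G → T, IsOneCocycle t →
      (∀ g₀ : G, IsOneCoboundary (fun h : Subgroup.zpowers g₀ => t (h : G))) →
      ∃ f : G → F, IsOneCocycle f ∧ IsOneCoboundary (fun g : G => π (f g) - t g)) := by
  refine ⟨fun f hf hπf => ?_, fun f hf g₀ => ?_, fun t ht hsha => ?_⟩
  · exact isOneCoboundary_of_isOneCoboundary_comp (fun _ => hP1.isOneCoboundary) hjG hπG hjinj
      hπsurj hex hf hπf
  · obtain ⟨m, hm⟩ := hF.exists_eq_smul_sub (isOfFinOrder_of_finite g₀)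
      (hf.sum_pow_smul_eq_zero g₀)
    exact (hf.isOneCoboundary_zpowers hm).map π fun (a : Subgroup.zpowers g₀) => hπG a
  · obtain ⟨f, hf, hπf⟩ := exists_isOneCocycle_comp_eq
      (fun _ => hP1.isTwoCoboundary_of_forall_zpowers) hjG hπG hjinj hπsurj hex ht hsha
    exact ⟨f, hf, 0, fun g => by simp only [hπf, sub_self, smul_zero]⟩

/-- Let `G` be a finite group and `0 → P̂₁ → F̂ → T̂ → 0` a short exact sequence of
`G`-lattices with `P̂₁` a permutation lattice and `F̂` flasque.  Then the induced map
`H¹(G, F̂) → H¹(G, T̂)` is injective and its image is exactly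
`Ш¹_ω(G, T̂)` (the classes whose restriction to every cyclic subgroup vanishes); in
particular `H¹(G, F̂) ≅ Ш¹_ω(G, T̂)`. -/
theorem H1_flasque_isoOnto_sha1_omega
    {G P1 F T : Type} [Group G] [Finite G]
    [AddCommGroup P1] [DistribMulAction G P1] [Module.Free ℤ P1] [Module.Finite ℤ P1]
    [AddCommGroup F] [DistribMulAction G F] [Module.Free ℤ F] [Module.Finite ℤ F]
    [AddCommGroup T] [DistribMulAction G T] [Module.Free ℤ T] [Module.Finite ℤ T]
    (j : P1 →+ F) (π : F →+ T)
    (hjG : ∀ (g : G) (x : P1), j (g • x) = g • j x)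
    (hπG : ∀ (g : G) (x : F), π (g • x) = g • π x)
    (hjinj : Function.Injective j) (hπsurj : Function.Surjective π)
    (hex : Function.Exact j π)
    (hP1 : IsPermutationLattice G P1) (hF : IsFlasqueLattice G F) :
    -- the induced map `H¹(G, F̂) → H¹(G, T̂)` is injective …
    (∀ f : G → F, IsOneCocycle f → IsOneCoboundary (fun g : G => π (f g)) →
      IsOneCoboundary f) ∧
    -- … its image lands in `Ш¹_ω(G, T̂)` …
    (∀ f : G → F, IsOneCocycle f → ∀ g₀ : G,
      IsOneCoboundary (fun h : Subgroup.zpowers g₀ => π (f (h : G)))) ∧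
    -- … and every class of `Ш¹_ω(G, T̂)` is in the image.
    (∀ t : G → T, IsOneCocycle t →
      (∀ g₀ : G, IsOneCoboundary (fun h : Subgroup.zpowers g₀ => t (h : G))) →
      ∃ f : G → F, IsOneCocycle f ∧ IsOneCoboundary (fun g : G => π (f g) - t g)) :=
  H1_flasque_isoOnto_sha1_omega_general j π hjG hπG hjinj hπsurj hex hP1 hF
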